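/- Let (R, 𝔪) be a two-dimensional regular local ring with infinite residue field, let y be a minimal generator of 𝔪, and let M ⊆ F = M** be an integrally closed finitely generated torsion-free R-module with ideal of maximal minors I = I(M). If I is contracted from S = R[𝔪/y], i.e. (I : y) = (I : 𝔪), then M is also contracted from S, i.e. (M :_F y) = (M :_F 𝔪). -/
import Mathlib


open IsLocalRing

section Defs

variable {R : Type*} [CommRing R]

/-- `R` is a two-dimensional regular local ring: Noetherian local of Krull dimension 2
whose maximal ideal is generated by two elements. -/
def IsTwoDimRegularLocal (R : Type*) [CommRing R] [IsLocalRing R] : Prop :=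
  IsNoetherianRing R ∧ ringKrullDim R = 2 ∧
    ∃ x y : R, maximalIdeal R = Ideal.span {x, y}

/-- `z` lies in the integral closure of the ideal `I`, i.e. it satisfies an equation
`z ^ n + c 1 * z ^ (n-1) + ⋯ + c n = 0` with `c i ∈ I ^ i`. -/
def MemIntClosure (I : Ideal R) (z : R) : Prop :=
  ∃ n : ℕ, 0 < n ∧ ∃ c : ℕ → R, (∀ i ∈ Finset.Icc 1 n, c i ∈ I ^ i) ∧
    z ^ n + ∑ i ∈ Finset.Icc 1 n, c i * z ^ (n - i) = 0

/-- The ideal `I` is integrally closed. -/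
def IdealIntClosed (I : Ideal R) : Prop := ∀ z, MemIntClosure I z → z ∈ I

/-- `I` is `𝔪`-primary. -/
def IsMPrimary [IsLocalRing R] (I : Ideal R) : Prop := I.radical = maximalIdeal R

/-- `ord I = n` : `n` is the largest power of the maximal ideal containing `I`. -/
def ordEQ [IsLocalRing R] (I : Ideal R) (n : ℕ) : Prop :=
  I ≤ maximalIdeal R ^ n ∧ ¬ I ≤ maximalIdeal R ^ (n + 1)

/-- Determinant of the square matrix with columns `w 0, …, w (r-1)`. -/
def colDet {r : ℕ} (w : Fin r → Fin r → R) : R :=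
  Matrix.det (Matrix.of fun i j => w j i)

/-- The ideal of maximal minors `I(M)` of a submodule `M ⊆ R^r`:  it is generated by all
determinants of `r × r` matrices whose columns lie in `M`. -/
def maxMinors {r : ℕ} (M : Submodule R (Fin r → R)) : Ideal R :=
  Ideal.span { d | ∃ w : Fin r → Fin r → R, (∀ j, w j ∈ M) ∧ d = colDet w }

/-- The ideal `I_k(M)` of `k × k` minors of a matrix whose columns generate `M ⊆ R^r`. -/
def minorsIdeal (k : ℕ) {r : ℕ} (M : Submodule R (Fin r → R)) : Ideal R :=
  Ideal.span { d | ∃ (w : Fin k → Fin r → R) (ρ : Fin k → Fin r),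
    Function.Injective ρ ∧ (∀ j, w j ∈ M) ∧
    d = Matrix.det (Matrix.of fun i j : Fin k => w j (ρ i)) }

/-- `v ∈ R^r` is integral over the submodule `M ⊆ R^r` : the determinant of every square
matrix with one column `v` and the remaining columns in `M` is integral over `I(M)`. -/
def IntegralOverMod {r : ℕ} (M : Submodule R (Fin r → R)) (v : Fin r → R) : Prop :=
  ∀ (w : Fin r → Fin r → R) (j₀ : Fin r), w j₀ = v → (∀ j, j ≠ j₀ → w j ∈ M) →
    MemIntClosure (maxMinors M) (colDet w)

/-- The submodule `M ⊆ R^r` is integrally closed. -/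
def ModIntClosed {r : ℕ} (M : Submodule R (Fin r → R)) : Prop :=
  ∀ v, IntegralOverMod M v → v ∈ M

/-- The length of an `R`-module, as the Krull dimension of its submodule lattice. -/
noncomputable def modLength (R : Type*) (M : Type*) [CommRing R] [AddCommGroup M]
    [Module R M] : WithBot ℕ∞ :=
  Order.krullDim (Submodule R M)

/-- `M ⊆ R^r` has finite colength; equivalently, `M` is a finitely generated torsion-free
module of rank `r` with double dual `M** = R^r`. -/
def FinColength {r : ℕ} (M : Submodule R (Fin r → R)) : Prop :=
  IsFiniteLength R ((Fin r → R) ⧸ M)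

/-- `M` has a nonzero free direct summand. -/
def HasFreeSummand {r : ℕ} (M : Submodule R (Fin r → R)) : Prop :=
  ∃ N P : Submodule R (Fin r → R), N ⊔ P = M ∧ N ⊓ P = ⊥ ∧ N ≠ ⊥ ∧ Module.Free R ↥N

/-- `M` is a direct sum of two nonzero submodules. -/
def DecomposableSub {r : ℕ} (M : Submodule R (Fin r → R)) : Prop :=
  ∃ N P : Submodule R (Fin r → R), N ⊔ P = M ∧ N ⊓ P = ⊥ ∧ N ≠ ⊥ ∧ P ≠ ⊥

/-- `M` is nonzero and not a direct sum of two nonzero submodules. -/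
def IndecomposableSub {r : ℕ} (M : Submodule R (Fin r → R)) : Prop :=
  M ≠ ⊥ ∧ ¬ DecomposableSub M

/-- `a` is a minimal generating set of the ideal `I`. -/
def MinGens {m : ℕ} (I : Ideal R) (a : Fin m → R) : Prop :=
  Ideal.span (Set.range a) = I ∧ ∀ j : Fin m, Ideal.span (a '' {j}ᶜ) ≠ I

/-- `a = c 0 * x^(r-1) + c 1 * x^(r-2) * y + ⋯ + c (r-1) * y^(r-1)`. -/
def Expresses (r : ℕ) (x y : R) (c : Fin r → R) (a : R) : Prop :=
  a = ∑ i : Fin r, c i * x ^ (r - 1 - (i : ℕ)) * y ^ (i : ℕ)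

/-- The `k`-th Koszul relation column between `x^(r-1), …, y^(r-1)`:
`y` in position `k` and `-x` in position `k+1`. -/
def stdRelCol (r : ℕ) (x y : R) (k : ℕ) : Fin r → R :=
  fun i => if (i : ℕ) = k then y else if (i : ℕ) = k + 1 then -x else 0

/-- The module generated by the coefficient columns `C j` together with the `r - 1`
Koszul relation columns between `x^(r-1), …, y^(r-1)`. -/
def MrSpan (r : ℕ) (x y : R) {m : ℕ} (C : Fin m → Fin r → R) :
    Submodule R (Fin r → R) :=
  Submodule.span R (Set.range C ∪ { v | ∃ k, k < r - 1 ∧ v = stdRelCol r x y k })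

/-- The data `(x, y, a, C)` presents the module `M_r(I)` : `𝔪 = (x,y)`, `a` is a minimal
generating set of `I` and column `C j` expresses `a j` in terms of `x^(r-1), …, y^(r-1)`. -/
def IsMrPresentation [IsLocalRing R] (r : ℕ) (I : Ideal R) {m : ℕ} (x y : R)
    (a : Fin m → R) (C : Fin m → Fin r → R) : Prop :=
  maximalIdeal R = Ideal.span {x, y} ∧ MinGens I a ∧ ∀ j, Expresses r x y (C j) (a j)

/-- `N` is a reduction of `M` : `N ≤ M` and every element of `M` is integral over `N`. -/
def IsReductionMod {r : ℕ} (N M : Submodule R (Fin r → R)) : Prop :=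
  N ≤ M ∧ ∀ v ∈ M, IntegralOverMod N v

/-- `N` is a minimal reduction of `M`. -/
def IsMinimalReductionMod {r : ℕ} (N M : Submodule R (Fin r → R)) : Prop :=
  IsReductionMod N M ∧ ∀ N' ≤ N, IsReductionMod N' M → N' = N

/-- The `j`-th signed maximal minor of an `r × (r+1)` matrix. -/
def signedMinor {r : ℕ} (A : Matrix (Fin r) (Fin (r + 1)) R) (j : Fin (r + 1)) : R :=
  (-1 : R) ^ (j : ℕ) * (A.submatrix id j.succAbove).det

/-- `M ⊆ R^r` is extremal: integrally closed, without free direct summands, with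
`λ(R/I(M)) = λ(R^r/M) + r(r-1)/2`. -/
def IsExtremal {r : ℕ} (M : Submodule R (Fin r → R)) : Prop :=
  FinColength M ∧ ModIntClosed M ∧ ¬ HasFreeSummand M ∧
    modLength R (R ⧸ maxMinors M) =
      modLength R ((Fin r → R) ⧸ M) + ((r * (r - 1) / 2 : ℕ) : WithBot ℕ∞)

/-- `a ∈ J`, `b ∈ K` is a joint reduction of the pair `(J, K)`. -/
def IsJointReduction (J K : Ideal R) (a b : R) : Prop :=
  a ∈ J ∧ b ∈ K ∧ ∃ n : ℕ,
    (Ideal.span {a} * K + Ideal.span {b} * J) * (J * K) ^ n = (J * K) ^ (n + 1)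

/-- `S` is the matrix `Sym^k(Q)` for `Q = [[a, c], [b, d]]` : with `X = aU + bV`,
`Y = cU + dV`, the `j`-th column of `S` records the coefficients of
`X^(k-j) Y^j` in terms of `U^k, U^(k-1)V, …, V^k`. -/
def IsSymOf (k : ℕ) (a b c d : R) (S : Matrix (Fin (k + 1)) (Fin (k + 1)) R) : Prop :=
  ∀ j : Fin (k + 1),
    ((MvPolynomial.C a * MvPolynomial.X 0 + MvPolynomial.C b * MvPolynomial.X 1) ^ (k - (j : ℕ)) *
        (MvPolynomial.C c * MvPolynomial.X 0 + MvPolynomial.C d * MvPolynomial.X 1) ^ (j : ℕ)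
      : MvPolynomial (Fin 2) R)
    = ∑ i : Fin (k + 1), MvPolynomial.C (S i j) *
        MvPolynomial.X 0 ^ (k - (i : ℕ)) * MvPolynomial.X 1 ^ (i : ℕ)

/-- The `r × s` bidiagonal matrix with `y` on the diagonal and `-x` directly below it. -/
def bidiag (r s : ℕ) (x y : R) : Matrix (Fin r) (Fin s) R :=
  Matrix.of fun i j =>
    if (i : ℕ) = (j : ℕ) then y else if (i : ℕ) = (j : ℕ) + 1 then -x else 0

end Defs

section Aux

variable {R : Type*} [CommRing R]

lemma colDet_eq_det {r : ℕ} (w : Fin r → Fin r → R) : colDet w = (Matrix.of w).det := by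
  unfold colDet
  rw [← Matrix.det_transpose (Matrix.of w)]
  rfl

lemma colDet_update_smul {r : ℕ} (W : Fin r → Fin r → R) (j₀ : Fin r) (c : R)
    (v : Fin r → R) :
    colDet (Function.update W j₀ (c • v)) = c * colDet (Function.update W j₀ v) := by
  rw [colDet_eq_det, colDet_eq_det]
  have h1 : Matrix.of (Function.update W j₀ (c • v)) = (Matrix.of W).updateRow j₀ (c • v) := rfl
  have h2 : Matrix.of (Function.update W j₀ v) = (Matrix.of W).updateRow j₀ v := rfl
  rw [h1, h2, Matrix.det_updateRow_smul]

lemma colDet_mem_maxMinors {r : ℕ} (M : Submodule R (Fin r → R)) (w : Fin r → Fin r → R)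
    (hw : ∀ j, w j ∈ M) : colDet w ∈ maxMinors M :=
  Ideal.subset_span ⟨w, hw, rfl⟩

lemma memIntClosure_of_mem (I : Ideal R) (z : R) (hz : z ∈ I) : MemIntClosure I z := by
  refine ⟨1, one_pos, fun _ => -z, ?_, ?_⟩
  · intro i hi
    simp only [Finset.mem_Icc] at hi
    have : i = 1 := le_antisymm hi.2 hi.1
    subst this
    simpa using I.neg_mem hz
  · simp

end Aux

/-- if `M` is an integrally closed module whose ideal of minors `I = I(M)` is
contracted from `R[𝔪/y]`, i.e. `(I : y) = (I : 𝔪)`, then `M` is contracted from `R[𝔪/y]`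
as well, i.e. `(M :_F y) = (M :_F 𝔪)`. -/
theorem statement15 (R : Type*) [CommRing R] [IsLocalRing R]
    (hreg : IsTwoDimRegularLocal R) [Infinite (IsLocalRing.ResidueField R)]
    (y : R) (hy : y ∈ maximalIdeal R) (hy2 : y ∉ maximalIdeal R ^ 2)
    (r : ℕ) (M : Submodule R (Fin r → R))
    (h1 : FinColength M) (h2 : ModIntClosed M)
    (hI : ∀ z : R, z * y ∈ maxMinors M ↔ ∀ w ∈ maximalIdeal R, z * w ∈ maxMinors M) :
    ∀ v : Fin r → R, y • v ∈ M ↔ ∀ w ∈ maximalIdeal R, w • v ∈ M := by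
  intro v
  constructor
  · intro hyv w hw
    apply h2
    intro W j₀ hWj₀ hcols
    -- W = update W j₀ (w • v)
    have hWeq : W = Function.update W j₀ (w • v) := by
      funext j
      by_cases hj : j = j₀
      · subst hj; simp [hWj₀]
      · simp [Function.update_of_ne hj]
    set z : R := colDet (Function.update W j₀ v) with hz
    have hdet : colDet W = w * z := by
      rw [hWeq, colDet_update_smul]
    have hyz : z * y ∈ maxMinors M := by
      have : colDet (Function.update W j₀ (y • v)) ∈ maxMinors M := by
        apply colDet_mem_maxMinors
        intro j
        by_cases hj : j = j₀
        · subst hj; simpa using hyv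
        · rw [Function.update_of_ne hj]
          exact hcols j hj
      rw [colDet_update_smul] at this
      rw [mul_comm]
      exact this
    have hwz : z * w ∈ maxMinors M := (hI z).mp hyz w hw
    rw [hdet, mul_comm]
    exact memIntClosure_of_mem _ _ hwz
  · intro h
    exact h y hy
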